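/- arXiv:2506.00170 — 2 statements merged into one kernel-verified Lean document; each statement's English description precedes it below -/
import Mathlib

section
/- Let f be a function on tuples of square matrices of all sizes that respects direct sums (f(X⊕Y) = f(X)⊕f(Y)) and similarity (f(S⁻¹XS) = S⁻¹f(X)S for all invertible S). Then f respects all intertwiners: if XΓ = ΓY entrywise for a rectangular matrix Γ, then f(X)Γ = Γf(Y). -/
/-!
Put `X` and `Y` side by side as the block-diagonal tuple `X ⊕ Y`. The hypothesis `Xᵢ Γ = Γ Yᵢ`
says exactly that `X ⊕ Y` commutes with the unipotent matrix `S = [[1, Γ], [0, 1]]`, i.e. is fixed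
by conjugation with `S`. Similarity equivariance then makes `f (X ⊕ Y) = f X ⊕ f Y` commute with
`S` as well, and reading off the upper right block gives `f X Γ = Γ f Y`.
-/

open Matrix

namespace Matrix

variable {R n m : Type*} [Fintype n] [Fintype m] [DecidableEq n] [DecidableEq m]

theorem commute_fromBlocks_zero_fromBlocks_one_iff [Ring R] {A : Matrix n n R}
    {B : Matrix m m R} {Γ : Matrix n m R} :
    Commute (fromBlocks A 0 0 B) (fromBlocks 1 Γ 0 1) ↔ A * Γ = Γ * B := by
  simp [commute_iff_eq, fromBlocks_multiply, fromBlocks_inj]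

theorem isUnit_fromBlocks_one_zero_one [CommRing R] (Γ : Matrix n m R) :
    IsUnit (fromBlocks 1 Γ 0 1 : Matrix (n ⊕ m) (n ⊕ m) R) := by
  simp [isUnit_iff_isUnit_det]

theorem inv_mul_mul_eq_self_iff_commute [CommRing R] {S A : Matrix n n R} (hS : IsUnit S) :
    S⁻¹ * A * S = A ↔ Commute A S := by
  have := hS.invertible
  rw [mul_assoc, inv_mul_eq_iff_eq_mul_of_invertible, commute_iff_eq, eq_comm]

end Matrix

theorem commute_apply_of_forall_commute_of_conj_eq {R n ι : Type*} [Fintype n] [DecidableEq n]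
    [CommRing R] {F : (ι → Matrix n n R) → Matrix n n R}
    (hF : ∀ (X : ι → Matrix n n R) (S : Matrix n n R), IsUnit S →
      F (fun i => S⁻¹ * X i * S) = S⁻¹ * F X * S)
    {X : ι → Matrix n n R} {S : Matrix n n R} (hS : IsUnit S) (hX : ∀ i, Commute (X i) S) :
    Commute (F X) S := by
  have hconj := hF X S hS
  simp_rw [(inv_mul_mul_eq_self_iff_commute hS).2 (hX _)] at hconj
  exact (inv_mul_mul_eq_self_iff_commute hS).1 hconj.symm

/-- A family of maps on tuples of square matrices of all sizes that respects
direct sums and similarity respects all intertwiners. -/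
theorem respects_sums_and_similarity_implies_free {K : Type*} [Field K] {d : ℕ}
    (f : ∀ n : ℕ, (Fin d → Matrix (Fin n) (Fin n) K) → Matrix (Fin n) (Fin n) K)
    (hsum : ∀ (n m : ℕ) (X : Fin d → Matrix (Fin n) (Fin n) K)
      (Y : Fin d → Matrix (Fin m) (Fin m) K),
      f (n + m) (fun i => Matrix.reindex finSumFinEquiv finSumFinEquiv
          (Matrix.fromBlocks (X i) 0 0 (Y i))) =
        Matrix.reindex finSumFinEquiv finSumFinEquiv
          (Matrix.fromBlocks (f n X) 0 0 (f m Y)))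
    (hsim : ∀ (n : ℕ) (X : Fin d → Matrix (Fin n) (Fin n) K)
      (S : Matrix (Fin n) (Fin n) K), IsUnit S →
      f n (fun i => S⁻¹ * X i * S) = S⁻¹ * f n X * S) :
    ∀ (n m : ℕ) (X : Fin d → Matrix (Fin n) (Fin n) K)
      (Y : Fin d → Matrix (Fin m) (Fin m) K) (Γ : Matrix (Fin n) (Fin m) K),
      (∀ i, X i * Γ = Γ * Y i) → f n X * Γ = Γ * f m Y := by
  intro n m X Y Γ hXY
  let ρ := reindexAlgEquiv K K (finSumFinEquiv : Fin n ⊕ Fin m ≃ Fin (n + m))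
  have hρ {A B} : Commute (ρ A) (ρ B) ↔ Commute A B := commute_map_iff ρ.injective
  have hS := (isUnit_fromBlocks_one_zero_one Γ).map ρ
  have hcomm := commute_apply_of_forall_commute_of_conj_eq (hsim (n + m)) hS
    (X := fun i => ρ (fromBlocks (X i) 0 0 (Y i)))
    fun i => hρ.2 (commute_fromBlocks_zero_fromBlocks_one_iff.2 (hXY i))
  simp only [ρ, coe_reindexAlgEquiv] at hcomm hρ
  rwa [hsum, hρ, commute_fromBlocks_zero_fromBlocks_one_iff] at hcomm
end

section
/- For a family f respecting direct sums and similarity, if Γ : Y → X is an intertwiner (X_i Γ = Γ Y_i for all i), then f applied to the tuple of block matrices Z with Z_i = [[X_i, X_iΓ − ΓY_i],[0, Y_i]] = [[X_i, 0],[0, Y_i]] conjugated by [[1,Γ],[0,1]] equals [[f(X), f(X)Γ − Γf(Y)],[0, f(Y)]]. -/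
open Matrix

/-- For a family respecting direct sums and similarity, evaluating on the block
matrices `[[Xᵢ, XᵢΓ − ΓYᵢ],[0, Yᵢ]]` (for an intertwiner `Γ`) gives
`[[f(X), f(X)Γ − Γf(Y)],[0, f(Y)]]`. -/
theorem free_map_block_lemma {K : Type*} [Field K] {d : ℕ}
    (f : ∀ n : ℕ, (Fin d → Matrix (Fin n) (Fin n) K) → Matrix (Fin n) (Fin n) K)
    (hsum : ∀ (n m : ℕ) (X : Fin d → Matrix (Fin n) (Fin n) K)
      (Y : Fin d → Matrix (Fin m) (Fin m) K),
      f (n + m) (fun i => Matrix.reindex finSumFinEquiv finSumFinEquiv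
          (Matrix.fromBlocks (X i) 0 0 (Y i))) =
        Matrix.reindex finSumFinEquiv finSumFinEquiv
          (Matrix.fromBlocks (f n X) 0 0 (f m Y)))
    (hsim : ∀ (n : ℕ) (X : Fin d → Matrix (Fin n) (Fin n) K)
      (S : Matrix (Fin n) (Fin n) K), IsUnit S →
      f n (fun i => S⁻¹ * X i * S) = S⁻¹ * f n X * S)
    (n m : ℕ) (X : Fin d → Matrix (Fin n) (Fin n) K)
    (Y : Fin d → Matrix (Fin m) (Fin m) K) (Γ : Matrix (Fin n) (Fin m) K)
    (hΓ : ∀ i, X i * Γ = Γ * Y i) :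
    f (n + m) (fun i => Matrix.reindex finSumFinEquiv finSumFinEquiv
        (Matrix.fromBlocks (X i) (X i * Γ - Γ * Y i) 0 (Y i))) =
      Matrix.reindex finSumFinEquiv finSumFinEquiv
        (Matrix.fromBlocks (f n X) (f n X * Γ - Γ * f m Y) 0 (f m Y)) := by
  set e := finSumFinEquiv (m := n) (n := m)
  set S : Matrix (Fin (n+m)) (Fin (n+m)) K := reindex e e (fromBlocks 1 Γ 0 1) with hS
  have hU : IsUnit S := by
    rw [hS, reindex_apply, isUnit_submatrix_equiv]
    simp
  have hinv : S⁻¹ = reindex e e (fromBlocks 1 (-Γ) 0 1) := by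
    rw [hS, inv_reindex, inv_fromBlocks_zero₂₁_of_isUnit_iff _ _ _ (by simp)]
    simp
  have hconj : ∀ (A : Matrix (Fin n) (Fin n) K) (B : Matrix (Fin m) (Fin m) K),
      S⁻¹ * (reindex e e (fromBlocks A 0 0 B)) * S =
      reindex e e (fromBlocks A (A * Γ - Γ * B) 0 B) := by
    intro A B
    rw [hinv, hS]
    simp only [reindex_apply]
    rw [submatrix_mul_equiv, submatrix_mul_equiv]
    congr 1
    rw [fromBlocks_multiply, fromBlocks_multiply]
    congr 1 <;> simp [Matrix.mul_sub, sub_eq_add_neg]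
  have harg : (fun i => Matrix.reindex finSumFinEquiv finSumFinEquiv
        (Matrix.fromBlocks (X i) (X i * Γ - Γ * Y i) 0 (Y i))) =
      fun i => S⁻¹ * (reindex e e (fromBlocks (X i) 0 0 (Y i))) * S := by
    funext i
    rw [hconj]
  rw [harg, hsim _ _ S hU, hsum, hconj]
end
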